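/- The group commutator of two elements of the Heisenberg-Weyl-parity group is [𝔇(α₁,β₁,γ₁,ν₁), 𝔇(α₂,β₂,γ₂,ν₂)] = D(2(α₁ν₂−α₂ν₁), 2(β₁ν₂−β₂ν₁), λ(ν₁,ν₂)(α₁β₂−α₂β₁)), where λ(0,0)=1 and λ(ν₁,ν₂)=−1 otherwise; in particular every such commutator lies in HW(d). -/

import Mathlib

open Matrix Complex BigOperators Finset Subgroup

noncomputable section

/-- The phase `ω(a) = exp(2πia/d)` for `a : ZMod d`. -/
def ω (d : ℕ) (a : ZMod d) : ℂ := Complex.exp (2 * Real.pi * Complex.I * (a.val : ℂ) / d)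

/-- The clock operator `Z`, with `Z|j⟩ = ω(j)|j⟩`. -/
def Zop (d : ℕ) : Matrix (ZMod d) (ZMod d) ℂ := Matrix.diagonal (fun j => ω d j)

/-- The shift operator `X`, with `X|j⟩ = |j+1⟩`. -/
def Xop (d : ℕ) : Matrix (ZMod d) (ZMod d) ℂ :=
  Matrix.of fun j k => if j = k + 1 then 1 else 0

/-- The finite Fourier transform, with entries `F_{jk} = ω(jk)/√d`. -/
def Fop (d : ℕ) : Matrix (ZMod d) (ZMod d) ℂ :=
  Matrix.of fun j k => ω d (j * k) / Real.sqrt d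

/-- `2⁻¹ = (d+1)/2` in `ZMod d` (for odd `d`). -/
def half (d : ℕ) : ZMod d := (((d + 1) / 2 : ℕ) : ZMod d)

/-- The general displacement operator `D(α,β,γ) = ω(γ - 2⁻¹αβ) Z^α X^β`. -/
def Dop (d : ℕ) [NeZero d] (α β γ : ZMod d) : Matrix (ZMod d) (ZMod d) ℂ :=
  ω d (γ - half d * (α * β)) • (Zop d ^ α.val * Xop d ^ β.val)

/-- The parity operator `P = F²`. -/
def Pop (d : ℕ) [NeZero d] : Matrix (ZMod d) (ZMod d) ℂ := Fop d ^ 2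

/-- The displacement-parity operator `𝔇(α,β,γ,ν) = D(α,β,γ) P^ν`. -/
def DPop (d : ℕ) [NeZero d] (α β γ : ZMod d) (ν : ZMod 2) : Matrix (ZMod d) (ZMod d) ℂ :=
  Dop d α β γ * Pop d ^ ν.val

/-- The sign `(-1)^ν` in `ZMod d`, for `ν : ZMod 2`. -/
def sgn (d : ℕ) (ν : ZMod 2) : ZMod d := (-1 : ZMod d) ^ ν.val

/-- The Heisenberg-Weyl group, as a subgroup of the units of the matrix ring,
generated by (in fact, consisting of) the displacement operators `D(α,β,γ)`. -/
def HW (d : ℕ) [NeZero d] : Subgroup (Matrix (ZMod d) (ZMod d) ℂ)ˣ :=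
  Subgroup.closure {u | ∃ α β γ : ZMod d, (u : Matrix (ZMod d) (ZMod d) ℂ) = Dop d α β γ}

/-- The subgroup of phases `ω(a)·1`. -/
def Phases (d : ℕ) [NeZero d] : Subgroup (Matrix (ZMod d) (ZMod d) ℂ)ˣ :=
  Subgroup.closure {u | ∃ a : ZMod d, (u : Matrix (ZMod d) (ZMod d) ℂ) = ω d a • (1 : Matrix (ZMod d) (ZMod d) ℂ)}

/-- The Heisenberg-Weyl-parity group, as a subgroup of the units of the matrix ring,
generated by (in fact, consisting of) the operators `𝔇(α,β,γ,ν)`. -/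
def HWP (d : ℕ) [NeZero d] : Subgroup (Matrix (ZMod d) (ZMod d) ℂ)ˣ :=
  Subgroup.closure {u | ∃ (α β γ : ZMod d) (ν : ZMod 2),
    (u : Matrix (ZMod d) (ZMod d) ℂ) = DPop d α β γ ν}

/-! The operators `𝔇(α,β,γ,ν)` multiply like a semidirect product of the Heisenberg group by
`ℤ/2`: `P² = 1` and `P D(α,β,γ) P = D(-α,-β,γ)`, so that with `s = (-1)^ν₁`
`𝔇(α₁,β₁,γ₁,ν₁) 𝔇(α₂,β₂,γ₂,ν₂) = 𝔇(α₁ + sα₂, β₁ + sβ₂, γ₁ + γ₂ + 2⁻¹s(α₁β₂ - α₂β₁), ν₁ + ν₂)`.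
Writing the commutator as `(g₁g₂)(g₂g₁)⁻¹`, both factors carry the parity `ν₁ + ν₂`, which
cancels, and the remaining displacement is read off from the group law. -/

variable {d : ℕ}

lemma two_mul_half (hodd : Odd d) : (2 : ZMod d) * half d = 1 := by
  have h : 2 * ((d + 1) / 2) = d + 1 := Nat.two_mul_div_two_of_even hodd.add_one
  simpa [half] using congrArg (Nat.cast : ℕ → ZMod d) h

lemma ZMod.eq_zero_or_eq_one (ν : ZMod 2) : ν = 0 ∨ ν = 1 := by
  decide +revert

lemma sgn_mul_self (ν : ZMod 2) : sgn d ν * sgn d ν = 1 := by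
  rw [sgn, ← mul_pow, neg_one_mul, neg_neg, one_pow]

lemma sgn_eq_one_sub_two_mul (ν : ZMod 2) : sgn d ν = 1 - 2 * (ν.val : ZMod d) := by
  obtain rfl | rfl := ν.eq_zero_or_eq_one <;> norm_num [sgn, ZMod.val_one_eq_one_mod]

lemma two_mul_ite_eq_sgn (ν₁ ν₂ : ZMod 2) :
    2 * (if ν₁ = 0 ∧ ν₂ = 0 then 1 else -1 : ZMod d) =
      sgn d ν₁ + sgn d ν₂ + sgn d ν₁ * sgn d ν₂ - 1 := by
  obtain rfl | rfl := ν₁.eq_zero_or_eq_one <;> obtain rfl | rfl := ν₂.eq_zero_or_eq_one <;>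
    norm_num [sgn, ZMod.val_one_eq_one_mod]

variable [NeZero d]

lemma ω_eq_stdAddChar (a : ZMod d) : ω d a = ZMod.stdAddChar a := by
  rw [ZMod.stdAddChar_apply, ZMod.toCircle_apply, ω]

lemma ω_add (a b : ZMod d) : ω d (a + b) = ω d a * ω d b := by
  simp only [ω_eq_stdAddChar, AddChar.map_add_eq_mul]

lemma ω_zero : ω d 0 = 1 := by
  rw [ω_eq_stdAddChar, AddChar.map_zero_eq_one]

lemma ω_pow (a : ZMod d) (n : ℕ) : ω d a ^ n = ω d (n * a) := by
  rw [ω_eq_stdAddChar, ω_eq_stdAddChar, ← AddChar.map_nsmul_eq_pow, nsmul_eq_mul]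

lemma sum_ω_mul (a : ZMod d) : ∑ m : ZMod d, ω d (m * a) = if a = 0 then (d : ℂ) else 0 := by
  simp only [ω_eq_stdAddChar, AddChar.sum_mulShift a (ZMod.isPrimitive_stdAddChar d), ZMod.card]
  split_ifs <;> simp

lemma Xop_pow_apply (n : ℕ) (j k : ZMod d) :
    (Xop d ^ n) j k = if j = k + n then 1 else 0 := by
  induction n generalizing k with
  | zero => simp [one_apply]
  | succ n ih =>
    rw [pow_succ, mul_apply, Finset.sum_eq_single (k + 1)]
    · rw [ih]
      simp [Xop, add_assoc, add_comm (1 : ZMod d)]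
    · intro m _ hm
      simp [Xop, hm]
    · simp

lemma Dop_apply (α β γ j k : ZMod d) :
    Dop d α β γ j k = if j = k + β then ω d (γ - half d * (α * β) + α * j) else 0 := by
  simp [Dop, Zop, diagonal_pow, Xop_pow_apply, ω_pow, ω_add]

lemma Pop_apply (j k : ZMod d) : Pop d j k = if j + k = 0 then 1 else 0 := by
  have hd : (d : ℂ) ≠ 0 := NeZero.ne _
  have hF (m : ZMod d) : Fop d j m * Fop d m k = ω d (m * (j + k)) / d := by
    rw [Fop, of_apply, of_apply, div_mul_div_comm, ← ω_add, ← ofReal_mul,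
      Real.mul_self_sqrt d.cast_nonneg, ofReal_natCast]
    ring_nf
  rw [Pop, sq, mul_apply, Finset.sum_congr rfl fun m _ => hF m, ← Finset.sum_div, sum_ω_mul]
  split_ifs <;> simp [hd]

lemma Pop_mul_apply (A : Matrix (ZMod d) (ZMod d) ℂ) (j k : ZMod d) :
    (Pop d * A) j k = A (-j) k := by
  simp [mul_apply, Pop_apply, add_eq_zero_iff_eq_neg']

lemma mul_Pop_apply (A : Matrix (ZMod d) (ZMod d) ℂ) (j k : ZMod d) :
    (A * Pop d) j k = A j (-k) := by
  simp [mul_apply, Pop_apply, add_eq_zero_iff_eq_neg]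

lemma Pop_mul_Pop : Pop d * Pop d = 1 := by
  ext j k
  simp [Pop_mul_apply, Pop_apply, one_apply, neg_add_eq_zero]

lemma Pop_mul_Dop (α β γ : ZMod d) : Pop d * Dop d α β γ = Dop d (-α) (-β) γ * Pop d := by
  ext j k
  rw [Pop_mul_apply, mul_Pop_apply, Dop_apply, Dop_apply]
  congr 1
  · exact propext ⟨fun h => by linear_combination -h, fun h => by linear_combination -h⟩
  · ring_nf

lemma Dop_mul_Dop (hodd : Odd d) (α₁ β₁ γ₁ α₂ β₂ γ₂ : ZMod d) :
    Dop d α₁ β₁ γ₁ * Dop d α₂ β₂ γ₂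
      = Dop d (α₁ + α₂) (β₁ + β₂) (γ₁ + γ₂ + half d * (α₁ * β₂ - α₂ * β₁)) := by
  ext j k
  rw [mul_apply, Finset.sum_eq_single (k + β₂) (fun m _ hm => by simp [Dop_apply, hm])
    (by simp), Dop_apply, Dop_apply, Dop_apply, if_pos rfl, ite_mul, zero_mul,
    show k + β₂ + β₁ = k + (β₁ + β₂) by ring]
  split_ifs with h
  · rw [← ω_add, h]
    congr 1
    linear_combination (α₂ * β₁) * two_mul_half hodd
  · rfl

lemma Dop_zero : Dop d 0 0 0 = 1 := by
  ext j k
  simp [Dop_apply, one_apply, ω_zero]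

lemma Pop_pow_mul_Dop (α β γ : ZMod d) (ν : ZMod 2) :
    Pop d ^ ν.val * Dop d α β γ = Dop d (sgn d ν * α) (sgn d ν * β) γ * Pop d ^ ν.val := by
  obtain rfl | rfl := ν.eq_zero_or_eq_one <;> simp [sgn, ZMod.val_one_eq_one_mod, Pop_mul_Dop]

lemma Pop_pow_mul_Pop_pow (ν₁ ν₂ : ZMod 2) :
    Pop d ^ ν₁.val * Pop d ^ ν₂.val = Pop d ^ (ν₁ + ν₂).val := by
  rw [← pow_add, ZMod.val_add, ← pow_eq_pow_mod _ (by rw [sq, Pop_mul_Pop])]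

lemma DPop_zero (α β γ : ZMod d) : DPop d α β γ 0 = Dop d α β γ := by
  simp [DPop]

lemma DPop_mul_DPop (hodd : Odd d) (α₁ β₁ γ₁ α₂ β₂ γ₂ : ZMod d) (ν₁ ν₂ : ZMod 2) :
    DPop d α₁ β₁ γ₁ ν₁ * DPop d α₂ β₂ γ₂ ν₂ =
      DPop d (α₁ + sgn d ν₁ * α₂) (β₁ + sgn d ν₁ * β₂)
        (γ₁ + γ₂ + half d * (sgn d ν₁ * (α₁ * β₂ - α₂ * β₁))) (ν₁ + ν₂) := by
  rw [DPop, DPop, mul_assoc, ← mul_assoc (Pop d ^ _), Pop_pow_mul_Dop, mul_assoc,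
    Pop_pow_mul_Pop_pow, ← mul_assoc, Dop_mul_Dop hodd, DPop]
  ring_nf

lemma DPop_inv (hodd : Odd d) (α β γ : ZMod d) (ν : ZMod 2) :
    (DPop d α β γ ν)⁻¹ = DPop d (-(sgn d ν * α)) (-(sgn d ν * β)) (-γ) ν := by
  refine inv_eq_right_inv ?_
  have hs := sgn_mul_self (d := d) ν
  rw [DPop_mul_DPop hodd, CharTwo.add_self_eq_zero, DPop_zero, ← Dop_zero]
  congr 1
  · linear_combination -α * hs
  · linear_combination -β * hs
  · ring

lemma DPop_mul_DPop_inv (hodd : Odd d) (α β γ α' β' γ' : ZMod d) (ν : ZMod 2) :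
    DPop d α β γ ν * (DPop d α' β' γ' ν)⁻¹ =
      Dop d (α - α') (β - β') (γ - γ' - half d * (α * β' - α' * β)) := by
  have hs := sgn_mul_self (d := d) ν
  rw [DPop_inv hodd, DPop_mul_DPop hodd, CharTwo.add_self_eq_zero, DPop_zero]
  congr 1
  · linear_combination -α' * hs
  · linear_combination -β' * hs
  · linear_combination half d * (α' * β - α * β') * hs

/-- The group commutator of two elements of the Heisenberg-Weyl-parity group:
`[𝔇(α₁,β₁,γ₁,ν₁), 𝔇(α₂,β₂,γ₂,ν₂)]
  = D(2(α₁ν₂-α₂ν₁), 2(β₁ν₂-β₂ν₁), λ(ν₁,ν₂)(α₁β₂-α₂β₁))`,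
where `λ(0,0) = 1` and `λ(ν₁,ν₂) = -1` otherwise; in particular every such
commutator lies in `HW(d)`. -/
theorem HWP_commutator (d : ℕ) [NeZero d] (hodd : Odd d)
    (α₁ β₁ γ₁ α₂ β₂ γ₂ : ZMod d) (ν₁ ν₂ : ZMod 2) :
    DPop d α₁ β₁ γ₁ ν₁ * DPop d α₂ β₂ γ₂ ν₂ *
        (DPop d α₁ β₁ γ₁ ν₁)⁻¹ * (DPop d α₂ β₂ γ₂ ν₂)⁻¹ =
      Dop d (2 * (α₁ * (ν₂.val : ZMod d) - α₂ * (ν₁.val : ZMod d)))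
            (2 * (β₁ * (ν₂.val : ZMod d) - β₂ * (ν₁.val : ZMod d)))
            ((if ν₁ = 0 ∧ ν₂ = 0 then 1 else -1 : ZMod d) * (α₁ * β₂ - α₂ * β₁)) := by
  rw [mul_assoc, ← Matrix.mul_inv_rev, DPop_mul_DPop hodd, DPop_mul_DPop hodd, add_comm ν₂,
    DPop_mul_DPop_inv hodd]
  have hn₁ := sgn_eq_one_sub_two_mul (d := d) ν₁
  have hn₂ := sgn_eq_one_sub_two_mul (d := d) ν₂
  congr 1
  · linear_combination α₂ * hn₁ - α₁ * hn₂
  · linear_combination β₂ * hn₁ - β₁ * hn₂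
  -- with `sᵢ = sgn d νᵢ`, the third coordinate is `2⁻¹(s₁ + s₂ + s₁s₂ - 1)(α₁β₂ - α₂β₁)`
  · linear_combination (-half d * (α₁ * β₂ - α₂ * β₁)) * two_mul_ite_eq_sgn (d := d) ν₁ ν₂ +
      (if ν₁ = 0 ∧ ν₂ = 0 then 1 else -1 : ZMod d) * (α₁ * β₂ - α₂ * β₁) * two_mul_half hodd
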